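/- Let A ∈ ℝ^{n×n} be a matrix whose entries are all positive, let ε ∈ (0, 0.1), and let Ã ∈ ℝ^{n×n} satisfy |Ã_{i,j} − A_{i,j}| ≤ ε·A_{i,j} for all (i,j) ∈ [n]×[n]. Let V ∈ ℝ^{n×d}, D = diag(A·1_n), and D̃ = diag(Ã·1_n). Then ‖D̃^{-1}ÃV − D^{-1}AV‖_∞ ≤ 2ε·‖V‖_∞; more precisely, ‖D̃^{-1}ÃV − D^{-1}ÃV‖_∞ ≤ ε·‖V‖_∞ and ‖D^{-1}ÃV − D^{-1}AV‖_∞ ≤ ε·‖V‖_∞. -/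
import Mathlib

open Matrix

noncomputable def linf {n m : ℕ} (M : Matrix (Fin n) (Fin m) ℝ) : ℝ := ⨆ i, ⨆ j, |M i j|

lemma linf_nonneg {n m : ℕ} (M : Matrix (Fin n) (Fin m) ℝ) : 0 ≤ linf M :=
  Real.iSup_nonneg fun _ => Real.iSup_nonneg fun _ => abs_nonneg _

lemma abs_le_linf {n m : ℕ} (M : Matrix (Fin n) (Fin m) ℝ) (i : Fin n) (j : Fin m) :
    |M i j| ≤ linf M := by
  have h1 : |M i j| ≤ ⨆ j, |M i j| :=
    le_ciSup (f := fun j => |M i j|) (Set.Finite.bddAbove (Set.finite_range _)) j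
  exact h1.trans (le_ciSup (f := fun i => ⨆ j, |M i j|)
    (Set.Finite.bddAbove (Set.finite_range _)) i)

lemma linf_le {n m : ℕ} (M : Matrix (Fin n) (Fin m) ℝ) {c : ℝ} (hc : 0 ≤ c)
    (h : ∀ i j, |M i j| ≤ c) : linf M ≤ c := by
  unfold linf
  rcases isEmpty_or_nonempty (Fin n) with hn | hn
  · rw [Real.iSup_of_isEmpty]; exact hc
  rcases isEmpty_or_nonempty (Fin m) with hm | hm
  · simp only [Real.iSup_of_isEmpty, ciSup_const]; exact hc
  exact ciSup_le fun i => ciSup_le fun j => h i j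

/-- If all entries of `A` are positive and `Ã` approximates `A` entrywise within relative
error `ε ∈ (0, 0.1)`, then with `D = diag(A·1_n)`, `D̃ = diag(Ã·1_n)` and any `V ∈ ℝ^{n×d}`,
`‖D̃⁻¹ÃV − D⁻¹AV‖_∞ ≤ 2ε·‖V‖_∞`; more precisely
`‖D̃⁻¹ÃV − D⁻¹ÃV‖_∞ ≤ ε·‖V‖_∞` and `‖D⁻¹ÃV − D⁻¹AV‖_∞ ≤ ε·‖V‖_∞`. -/
theorem attention_normalization_error {n d : ℕ} (A At : Matrix (Fin n) (Fin n) ℝ)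
    (V : Matrix (Fin n) (Fin d) ℝ) (ε : ℝ) (hε0 : 0 < ε) (hε1 : ε < 0.1)
    (hpos : ∀ i j, 0 < A i j)
    (happrox : ∀ i j, |At i j - A i j| ≤ ε * A i j) :
    linf ((Matrix.diagonal fun i => ∑ j, At i j)⁻¹ * At * V
        - (Matrix.diagonal fun i => ∑ j, A i j)⁻¹ * A * V) ≤ 2 * ε * linf V
    ∧ linf ((Matrix.diagonal fun i => ∑ j, At i j)⁻¹ * At * V
        - (Matrix.diagonal fun i => ∑ j, A i j)⁻¹ * At * V) ≤ ε * linf V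
    ∧ linf ((Matrix.diagonal fun i => ∑ j, A i j)⁻¹ * At * V
        - (Matrix.diagonal fun i => ∑ j, A i j)⁻¹ * A * V) ≤ ε * linf V := by
  have hL : 0 ≤ linf V := linf_nonneg V
  have hε1' : ε < 1 := by linarith [show (0.1:ℝ) < 1 by norm_num]
  rcases Nat.eq_zero_or_pos n with rfl | hn
  · refine ⟨?_, ?_, ?_⟩ <;>
    · apply linf_le _ (by positivity)
      intro i j; exact absurd i.2 (by omega)
  set s : Fin n → ℝ := fun i => ∑ j, A i j with hsdef
  set st : Fin n → ℝ := fun i => ∑ j, At i j with hstdef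
  have hs : ∀ i, 0 < s i := fun i =>
    Finset.sum_pos (fun j _ => hpos i j) ⟨⟨0, hn⟩, Finset.mem_univ _⟩
  have hdiff : ∀ i, |st i - s i| ≤ ε * s i := by
    intro i
    have h1 : st i - s i = ∑ j, (At i j - A i j) := by
      simp [hsdef, hstdef, Finset.sum_sub_distrib]
    rw [h1]
    calc |∑ j, (At i j - A i j)| ≤ ∑ j, |At i j - A i j| := Finset.abs_sum_le_sum_abs _ _
      _ ≤ ∑ j, ε * A i j := Finset.sum_le_sum fun j _ => happrox i j
      _ = ε * s i := by rw [hsdef, Finset.mul_sum]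
  have hst : ∀ i, 0 < st i := by
    intro i
    have := abs_le.mp (hdiff i)
    nlinarith [hs i]
  have hAt : ∀ i j, 0 < At i j := by
    intro i j
    have := abs_le.mp (happrox i j)
    nlinarith [hpos i j]
  have hinv : ∀ (f : Fin n → ℝ), (∀ i, f i ≠ 0) →
      (Matrix.diagonal f)⁻¹ = Matrix.diagonal (fun i => (f i)⁻¹) := by
    intro f hf
    apply Matrix.inv_eq_right_inv
    rw [Matrix.diagonal_mul_diagonal]
    convert Matrix.diagonal_one with i
    exact mul_inv_cancel₀ (hf i)
  rw [hinv s (fun i => (hs i).ne'), hinv st (fun i => (hst i).ne')]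
  have hentry : ∀ (g : Fin n → ℝ) (M : Matrix (Fin n) (Fin n) ℝ) (i : Fin n) (j : Fin d),
      (Matrix.diagonal g * M * V) i j = g i * ∑ k, M i k * V k j := by
    intro g M i j
    rw [Matrix.mul_apply, Finset.mul_sum]
    refine Finset.sum_congr rfl fun k _ => ?_
    rw [Matrix.diagonal_mul, mul_assoc]
  -- bound for middle term
  have hmid : ∀ i j, |((Matrix.diagonal fun i => (st i)⁻¹) * At * V
      - (Matrix.diagonal fun i => (s i)⁻¹) * At * V) i j| ≤ ε * linf V := by
    intro i j
    rw [Matrix.sub_apply, hentry, hentry]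
    set T := ∑ k, At i k * V k j with hT
    have hTb : |T| ≤ st i * linf V := by
      calc |T| ≤ ∑ k, |At i k * V k j| := Finset.abs_sum_le_sum_abs _ _
        _ ≤ ∑ k, At i k * linf V := by
            refine Finset.sum_le_sum fun k _ => ?_
            rw [abs_mul, abs_of_pos (hAt i k)]
            exact mul_le_mul_of_nonneg_left (abs_le_linf V k j) (hAt i k).le
        _ = st i * linf V := by rw [hstdef, Finset.sum_mul]
    have hs' : s i ≠ 0 := (hs i).ne'
    have hst' : st i ≠ 0 := (hst i).ne'
    have key : (st i)⁻¹ * T - (s i)⁻¹ * T = ((s i - st i) / (st i * s i)) * T := by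
      field_simp
    rw [key, abs_mul, abs_div, abs_of_pos (mul_pos (hst i) (hs i))]
    have h1 : |s i - st i| ≤ ε * s i := by rw [abs_sub_comm]; exact hdiff i
    calc |s i - st i| / (st i * s i) * |T|
        ≤ (ε * s i) / (st i * s i) * (st i * linf V) := by
          apply mul_le_mul _ hTb (abs_nonneg _)
            (div_nonneg (mul_pos hε0 (hs i)).le (mul_pos (hst i) (hs i)).le)
          exact div_le_div_of_nonneg_right h1 (mul_pos (hst i) (hs i)).le
      _ = ε * linf V := by field_simp
  have hright : ∀ i j, |((Matrix.diagonal fun i => (s i)⁻¹) * At * V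
      - (Matrix.diagonal fun i => (s i)⁻¹) * A * V) i j| ≤ ε * linf V := by
    intro i j
    rw [Matrix.sub_apply, hentry, hentry, ← mul_sub, ← Finset.sum_sub_distrib]
    have h2 : |∑ k, (At i k * V k j - A i k * V k j)| ≤ ε * s i * linf V := by
      calc |∑ k, (At i k * V k j - A i k * V k j)|
          ≤ ∑ k, |At i k - A i k| * |V k j| := by
            refine (Finset.abs_sum_le_sum_abs _ _).trans
              (Finset.sum_le_sum fun k _ => ?_)
            rw [← sub_mul, abs_mul]
        _ ≤ ∑ k, (ε * A i k) * linf V := by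
            refine Finset.sum_le_sum fun k _ => ?_
            exact mul_le_mul (happrox i k) (abs_le_linf V k j) (abs_nonneg _)
              (mul_pos hε0 (hpos i k)).le
        _ = ε * s i * linf V := by
            rw [show s i = ∑ j, A i j from rfl, Finset.mul_sum, Finset.sum_mul]
    rw [abs_mul, abs_of_pos (inv_pos.mpr (hs i))]
    calc (s i)⁻¹ * |∑ k, (At i k * V k j - A i k * V k j)|
        ≤ (s i)⁻¹ * (ε * s i * linf V) :=
          mul_le_mul_of_nonneg_left h2 (inv_pos.mpr (hs i)).le
      _ = ε * linf V := by
          have hs' : s i ≠ 0 := (hs i).ne'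
          field_simp
  refine ⟨?_, linf_le _ (by positivity) hmid, linf_le _ (by positivity) hright⟩
  apply linf_le _ (by positivity)
  intro i j
  have h3 : ((Matrix.diagonal fun i => (st i)⁻¹) * At * V
      - (Matrix.diagonal fun i => (s i)⁻¹) * A * V) i j
      = ((Matrix.diagonal fun i => (st i)⁻¹) * At * V
      - (Matrix.diagonal fun i => (s i)⁻¹) * At * V) i j
      + ((Matrix.diagonal fun i => (s i)⁻¹) * At * V
      - (Matrix.diagonal fun i => (s i)⁻¹) * A * V) i j := by
    simp [Matrix.sub_apply]
  rw [h3]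
  calc |_ + _| ≤ _ + _ := abs_add_le _ _
    _ ≤ ε * linf V + ε * linf V := add_le_add (hmid i j) (hright i j)
    _ = 2 * ε * linf V := by ring
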